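/- For δ ∈ (0,1) define E(δ) = (cosh(2(1+δ)·δ^{1/5} + 2δ) − cosh(2δ^{1/5}/(1+δ) − δ)) / (sinh²(δ^{1/5}/(1+δ) − δ)·tanh²(δ^{1/5}/(2(1+δ)) − δ/2)). There exist constants C > 0 and δ₀ > 0 such that for all δ with 0 < δ < δ₀, one has |E(δ) − 24·δ^{2/5}| ≤ C·δ^{3/5}. -/

import Mathlib

/-!
Put `a = δ ^ (1 / 5)`. The numerator is `cosh (p + q) - cosh (p - q) = 2 sinh p sinh q`, where
the half-sum `p` is `2a` and the half-difference `q` is `3δ/2`, up to relative errors `O(a)`;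
the denominator is `sinh s ^ 4 / (cosh s + 1) ^ 2` with `s` equal to `a` up to the same error.
Hence `E δ ≈ 2 · 2a · (3δ/2) · 2² / a⁴ = 24 δ / a³ = 24 δ ^ (2/5)`, and since
`x ≤ sinh x ≤ x + x²` and `1 ≤ cosh x ≤ 1 + x²` on `[0, 1]`, the relative error of the whole
quotient is `O(a) = O(δ ^ (1/5))`.
-/

open Real

noncomputable def E (δ : ℝ) : ℝ :=
  (Real.cosh (2 * (1 + δ) * δ ^ ((1 : ℝ) / 5) + 2 * δ) -
      Real.cosh (2 * δ ^ ((1 : ℝ) / 5) / (1 + δ) - δ)) /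
    (Real.sinh (δ ^ ((1 : ℝ) / 5) / (1 + δ) - δ) ^ 2 *
      Real.tanh (δ ^ ((1 : ℝ) / 5) / (2 * (1 + δ)) - δ / 2) ^ 2)

namespace Real

theorem cosh_add_sub_cosh_sub (x y : ℝ) : cosh (x + y) - cosh (x - y) = 2 * sinh x * sinh y := by
  rw [cosh_add, cosh_sub]; ring

theorem tanh_half (x : ℝ) : tanh (x / 2) = sinh x / (cosh x + 1) := by
  obtain ⟨y, rfl⟩ : ∃ y, x = 2 * y := ⟨x / 2, by ring⟩
  have hcosh := cosh_pos y
  rw [mul_div_cancel_left₀ y two_ne_zero, sinh_two_mul, cosh_two_mul, sinh_sq,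
    tanh_eq_sinh_div_cosh, show cosh y ^ 2 + (cosh y ^ 2 - 1) + 1 = 2 * cosh y * cosh y by ring]
  field_simp

theorem sinh_sq_mul_tanh_half_sq (x : ℝ) :
    sinh x ^ 2 * tanh (x / 2) ^ 2 = sinh x ^ 4 / (cosh x + 1) ^ 2 := by
  rw [tanh_half, div_pow, ← mul_div_assoc, ← pow_add]

theorem abs_sinh_sub_self_le {x : ℝ} (hx : |x| ≤ 1) : |sinh x - x| ≤ x ^ 2 := by
  have h₁ := abs_exp_sub_one_sub_id_le hx
  have h₂ := abs_exp_sub_one_sub_id_le (x := -x) (by rwa [abs_neg])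
  rw [neg_sq] at h₂
  calc |sinh x - x| = |(exp x - 1 - x) - (exp (-x) - 1 - -x)| / 2 := by
        rw [sinh_eq, ← abs_two, ← abs_div]; congr 1; ring
    _ ≤ (x ^ 2 + x ^ 2) / 2 := by gcongr; exact (abs_sub _ _).trans (add_le_add h₁ h₂)
    _ = x ^ 2 := by ring

theorem cosh_le_one_add_sq {x : ℝ} (hx : |x| ≤ 1) : cosh x ≤ 1 + x ^ 2 := by
  have h₁ := abs_exp_sub_one_sub_id_le hx
  have h₂ := abs_exp_sub_one_sub_id_le (x := -x) (by rwa [abs_neg])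
  rw [neg_sq] at h₂
  rw [cosh_eq]
  linarith [le_abs_self (exp x - 1 - x), le_abs_self (exp (-x) - 1 - -x)]

end Real

theorem sinh_mul_sinh_mul_div_le {a d p q s : ℝ} (ha : 0 < a) (ha' : a ≤ 1 / 10) (hd : 0 < d)
    (hda : d ≤ a ^ 2) (hp : 2 * a ≤ p ∧ p ≤ 2 * a * (1 + a))
    (hq : 3 / 2 * d ≤ q ∧ q ≤ 3 / 2 * d * (1 + 2 * a)) (hs : a * (1 - 2 * a) ≤ s ∧ s ≤ a) :
    2 * sinh p * sinh q * (cosh s + 1) ^ 2 / sinh s ^ 4 ≤ 24 * d / a ^ 3 * (1 + 50 * a) := by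
  have hsinh_p : sinh p ≤ 2 * a * (1 + a) * (1 + 3 * a) := by
    have := abs_sinh_sub_self_le (x := p) (by rw [abs_le]; constructor <;> nlinarith)
    nlinarith [le_abs_self (sinh p - p)]
  have hsinh_q : sinh q ≤ 3 / 2 * d * (1 + 2 * a) * (1 + a) := by
    have hq₀ : 0 ≤ q := by linarith
    have hqa : q ≤ a := by nlinarith
    have := abs_sinh_sub_self_le (x := q) (by rw [abs_le]; constructor <;> linarith)
    nlinarith [le_abs_self (sinh q - q), mul_le_mul_of_nonneg_left hqa hq₀]
  have hsinh_p₀ : 0 ≤ sinh p := sinh_nonneg_iff.2 (by linarith)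
  have hsinh_q₀ : 0 ≤ sinh q := sinh_nonneg_iff.2 (by linarith)
  have hcosh_s : cosh s + 1 ≤ 2 * (1 + a) := by
    have hs₀ : 0 ≤ s := by nlinarith
    have := cosh_le_one_add_sq (x := s) (by rw [abs_le]; constructor <;> linarith)
    nlinarith [mul_le_mul hs.2 hs.2 hs₀ ha.le]
  have hsinh_s : a * (1 - 2 * a) ≤ sinh s := hs.1.trans (self_le_sinh_iff.2 (by nlinarith))
  have h2a : 0 < 1 - 2 * a := by linarith
  calc 2 * sinh p * sinh q * (cosh s + 1) ^ 2 / sinh s ^ 4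
      ≤ 2 * (2 * a * (1 + a) * (1 + 3 * a)) * (3 / 2 * d * (1 + 2 * a) * (1 + a)) *
          (2 * (1 + a)) ^ 2 / (a * (1 - 2 * a)) ^ 4 := by
        gcongr
    _ = 24 * d / a ^ 3 * ((1 + a) ^ 4 * (1 + 3 * a) * (1 + 2 * a) / (1 - 2 * a) ^ 4) := by
        field_simp; ring
    _ ≤ 24 * d / a ^ 3 * (1 + 50 * a) := by
        gcongr
        rw [div_le_iff₀ (by positivity)]
        have h : 0 ≤ 1 / 10 - a := by linarith
        nlinarith [mul_nonneg ha.le h, pow_pos ha 2, pow_pos ha 3, pow_pos ha 4, pow_pos ha 5,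
          pow_pos ha 6]

theorem le_sinh_mul_sinh_mul_div {a d p q s : ℝ} (ha : 0 < a) (ha' : a ≤ 1 / 10) (hd : 0 < d)
    (hp : 2 * a ≤ p) (hq : 3 / 2 * d ≤ q) (hs : a * (1 - 2 * a) ≤ s ∧ s ≤ a) :
    24 * d / a ^ 3 * (1 - 4 * a) ≤ 2 * sinh p * sinh q * (cosh s + 1) ^ 2 / sinh s ^ 4 := by
  have hs₀ : 0 < s := lt_of_lt_of_le (by nlinarith) hs.1
  have hsinh_s : sinh s ≤ a * (1 + a) := by
    have := abs_sinh_sub_self_le (x := s) (by rw [abs_le]; constructor <;> linarith)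
    nlinarith [le_abs_self (sinh s - s), mul_le_mul hs.2 hs.2 hs₀.le ha.le]
  have hsinh_p : 2 * a ≤ sinh p := hp.trans (self_le_sinh_iff.2 (by linarith))
  have hsinh_q : 3 / 2 * d ≤ sinh q := hq.trans (self_le_sinh_iff.2 (by linarith))
  have hcosh_s : 2 ≤ cosh s + 1 := by linarith [one_le_cosh s]
  calc 24 * d / a ^ 3 * (1 - 4 * a)
      ≤ 24 * d / a ^ 3 * (1 / (1 + a) ^ 4) := by
        gcongr
        rw [le_div_iff₀ (by positivity)]
        nlinarith [pow_pos ha 2, pow_pos ha 3, pow_pos ha 4, pow_pos ha 5]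
    _ = 2 * (2 * a) * (3 / 2 * d) * 2 ^ 2 / (a * (1 + a)) ^ 4 := by
        field_simp; ring
    _ ≤ 2 * sinh p * sinh q * (cosh s + 1) ^ 2 / sinh s ^ 4 := by
        have hsinh_s₀ : 0 < sinh s := sinh_pos_iff.2 hs₀
        have hsinh_p₀ : 0 < sinh p := by linarith
        have hsinh_q₀ : 0 < sinh q := by linarith
        gcongr

theorem abs_sinh_mul_sinh_mul_div_sub_le {a d p q s : ℝ} (ha : 0 < a) (ha' : a ≤ 1 / 10)
    (hd : 0 < d) (hda : d ≤ a ^ 2) (hp : 2 * a ≤ p ∧ p ≤ 2 * a * (1 + a))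
    (hq : 3 / 2 * d ≤ q ∧ q ≤ 3 / 2 * d * (1 + 2 * a)) (hs : a * (1 - 2 * a) ≤ s ∧ s ≤ a) :
    |2 * sinh p * sinh q * (cosh s + 1) ^ 2 / sinh s ^ 4 - 24 * d / a ^ 3| ≤ 1200 * d / a ^ 2 := by
  have hupper := sinh_mul_sinh_mul_div_le ha ha' hd hda hp hq hs
  have hlower := le_sinh_mul_sinh_mul_div ha ha' hd hp.1 hq.1 hs
  have hM : 24 * d / a ^ 3 * (50 * a) = 1200 * d / a ^ 2 := by field_simp; ring
  have hM₀ : 0 ≤ 24 * d / a ^ 3 := by positivity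
  rw [abs_sub_le_iff, ← hM]
  constructor <;> nlinarith

/-- `E δ = E₂ (δ ^ (1 / 5)) δ`. -/
noncomputable def E₂ (a d : ℝ) : ℝ :=
  (cosh (2 * (1 + d) * a + 2 * d) - cosh (2 * a / (1 + d) - d)) /
    (sinh (a / (1 + d) - d) ^ 2 * tanh (a / (2 * (1 + d)) - d / 2) ^ 2)

theorem E₂_eq (a d : ℝ) :
    E₂ a d = 2 * sinh ((1 + d) * a + a / (1 + d) + d / 2) *
        sinh ((1 + d) * a - a / (1 + d) + 3 / 2 * d) *
        (cosh (a / (1 + d) - d) + 1) ^ 2 / sinh (a / (1 + d) - d) ^ 4 := by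
  have hsum : 2 * (1 + d) * a + 2 * d =
      ((1 + d) * a + a / (1 + d) + d / 2) + ((1 + d) * a - a / (1 + d) + 3 / 2 * d) := by ring
  have hdiff : 2 * a / (1 + d) - d =
      ((1 + d) * a + a / (1 + d) + d / 2) - ((1 + d) * a - a / (1 + d) + 3 / 2 * d) := by ring
  have hhalf : a / (2 * (1 + d)) - d / 2 = (a / (1 + d) - d) / 2 := by
    rw [sub_div, div_div, mul_comm]
  rw [E₂, hsum, hdiff, hhalf, cosh_add_sub_cosh_sub, sinh_sq_mul_tanh_half_sq, div_div_eq_mul_div]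

theorem abs_E₂_sub_le {a d : ℝ} (ha : 0 < a) (ha' : a ≤ 1 / 10) (hd : 0 < d) (hda : d ≤ a ^ 2) :
    |E₂ a d - 24 * d / a ^ 3| ≤ 1200 * d / a ^ 2 := by
  have hd₁ : 0 < 1 + d := by linarith
  have hr : a * (1 - d) ≤ a / (1 + d) := by
    rw [le_div_iff₀ hd₁]; nlinarith [mul_pos ha (mul_pos hd hd)]
  have hr' : a / (1 + d) ≤ a := div_le_self ha.le (by linarith)
  have had : a * d ≤ a ^ 3 := by nlinarith
  rw [E₂_eq]
  refine abs_sinh_mul_sinh_mul_div_sub_le ha ha' hd hda ⟨?_, ?_⟩ ⟨?_, ?_⟩ ⟨?_, ?_⟩ <;>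
    nlinarith

theorem E_asymptotic :
    ∃ C > (0 : ℝ), ∃ δ₀ > (0 : ℝ), ∀ δ : ℝ, 0 < δ → δ < δ₀ →
      |E δ - 24 * δ ^ ((2 : ℝ) / 5)| ≤ C * δ ^ ((3 : ℝ) / 5) := by
  refine ⟨1200, by norm_num, (1 / 10) ^ 5, by positivity, fun δ hδ hδ₀ => ?_⟩
  set a := δ ^ ((1 : ℝ) / 5)
  have hpow (n : ℕ) : δ ^ ((n : ℝ) / 5) = a ^ n := by
    rw [← rpow_natCast, ← rpow_mul hδ.le]; ring_nf
  have ha₅ : a ^ 5 = δ := by rw [← hpow 5]; norm_num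
  have ha : 0 < a := by positivity
  have ha' : a ≤ 1 / 10 := by
    refine (pow_lt_pow_iff_left₀ ha.le (by norm_num) (by norm_num : 5 ≠ 0)).1 ?_ |>.le
    rwa [ha₅]
  have hda : δ ≤ a ^ 2 := by
    rw [← ha₅]; exact pow_le_pow_of_le_one ha.le (by linarith) (by norm_num)
  have h₂ := hpow 2
  have h₃ := hpow 3
  push_cast at h₂ h₃
  rw [h₂, h₃, show E δ = E₂ a δ from rfl]
  convert abs_E₂_sub_le ha ha' hδ hda using 3 <;> rw [← ha₅] <;> field_simp
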